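/- Let G be the disjoint union of three stars S_1, S_2, S_3 with n_1 ≥ n_2 ≥ n_3 vertices respectively, with n = n_1 + n_2 + n_3 = d^h a power of d ≥ 2 and n_1 ≥ n/d. Let T be a complete d-regular tree of height h. Then the minimum total arrangement cost equals 2·(h_1·n_1 − (d^{h_1}−1)/(d−1)) + 2·(h_2·n_2 − (d^{h_2}−1)/(d−1)) + 2·(h_3·n_3 − (d^{h_3}−1)/(d−1)), where h_i = ⌈log_d n_i⌉. -/

import Mathlib

/-!
Leaf `i` of the tree has ancestor `i / d ^ m` at `m` levels up, so two leaves are at distance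
twice the height of their lowest common ancestor, and a star with centre `c` costs twice the sum
over `t < h` of the number of its leaves outside the height-`t` subtree of `c`.  That subtree has
only `d ^ t` leaves, which bounds each star below by its standalone optimum
`2 ∑ t, (m - d ^ t)⁺`, whatever the other stars do.  The bound is attained when the leaves of the
star contain the height-`(H - 1)` subtree of its centre and lie in the height-`H` one,
`H = ⌈log_d m⌉`.  With `P = d ^ (h - 1) ≤ n 0`, putting star `1` on `[P, P + n 1)`, star `2` on
the last `n 2` leaves and star `0` on the rest, which contains the subtree `[0, P)`, does this
for all three stars at once.
-/

/-- The complete `d`-regular tree of height `h`: vertices are pairs of a level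
`k ∈ {0,…,h}` and an index in `Fin (d^k)`; the parent of vertex `m` at level `k+1`
is vertex `m / d` at level `k`.  Leaves are the vertices at level `h`, and the
canonical order of leaves is the order of their indices. -/
def dAryTree (d h : ℕ) : SimpleGraph ((k : Fin (h + 1)) × Fin (d ^ (k : ℕ))) where
  Adj x y := (x.1.val + 1 = y.1.val ∧ x.2.val = y.2.val / d) ∨
             (y.1.val + 1 = x.1.val ∧ y.2.val = x.2.val / d)
  symm := ⟨fun _ _ hxy => hxy.symm⟩
  loopless := ⟨by rintro x (⟨h1, _⟩ | ⟨h1, _⟩) <;> omega⟩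

/-- The `i`-th leaf (in canonical order) of the complete `d`-regular tree of height `h`. -/
def leafVert (d h : ℕ) (i : Fin (d ^ h)) : (k : Fin (h + 1)) × Fin (d ^ (k : ℕ)) :=
  ⟨⟨h, Nat.lt_succ_self h⟩, i⟩

/-- The distance in the complete `d`-regular tree of height `h` between its `i`-th and
`j`-th leaves (in canonical order). -/
noncomputable def leafDist (d h : ℕ) (i j : Fin (d ^ h)) : ℕ :=
  (dAryTree d h).dist (leafVert d h i) (leafVert d h j)

/-- Given an arrangement `φ` of vertices on leaves, the leaf distance associated to an
unordered pair of vertices. -/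
noncomputable def edgeDist {V : Type*} (d h : ℕ) (φ : V → Fin (d ^ h)) : Sym2 V → ℕ :=
  Sym2.lift ⟨fun u v => leafDist d h (φ u) (φ v), fun _ _ => SimpleGraph.dist_comm⟩

/-- The guest graph is the disjoint union of three stars; its vertex type is
`(i : Fin 3) × Fin (n i)`, where in block `i` the central vertex is `⟨i, 0⟩`, adjacent to
all other vertices `⟨i, v⟩`, `v ≠ 0`.  `triStarCost` is the total leaf-distance of an
arrangement `φ` on the leaves of the complete `d`-regular tree of height `h`. -/
noncomputable def triStarCost (d h : ℕ) (n : Fin 3 → ℕ)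
    (φ : ((i : Fin 3) × Fin (n i)) → Fin (d ^ h)) : ℕ :=
  ∑ i : Fin 3, ∑ v : Fin (n i),
    if v.val = 0 then 0 else leafDist d h (φ ⟨i, ⟨0, v.pos⟩⟩) (φ ⟨i, v⟩)

open Finset Function

noncomputable def lcaHeight (d i j : ℕ) : ℕ := sInf {m | i / d ^ m = j / d ^ m}

section LcaHeight

variable {d h i j : ℕ}

theorem div_pow_eq_div_pow_of_le {m t : ℕ} (hm : i / d ^ m = j / d ^ m) (ht : m ≤ t) :
    i / d ^ t = j / d ^ t := by
  obtain ⟨k, rfl⟩ := Nat.exists_eq_add_of_le ht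
  simp only [pow_add, ← Nat.div_div_eq_div_mul, hm]

theorem div_pow_eq_div_pow_iff_lcaHeight_le (hi : i < d ^ h) (hj : j < d ^ h) {t : ℕ} :
    i / d ^ t = j / d ^ t ↔ lcaHeight d i j ≤ t := by
  have hh : h ∈ {m | i / d ^ m = j / d ^ m} := by
    simp [Nat.div_eq_of_lt hi, Nat.div_eq_of_lt hj]
  exact ⟨fun ht => Nat.sInf_le ht, div_pow_eq_div_pow_of_le (Nat.sInf_mem ⟨h, hh⟩)⟩

theorem lcaHeight_le (hi : i < d ^ h) (hj : j < d ^ h) : lcaHeight d i j ≤ h :=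
  (div_pow_eq_div_pow_iff_lcaHeight_le hi hj).1 (by simp [Nat.div_eq_of_lt hi, Nat.div_eq_of_lt hj])

theorem lcaHeight_eq_card (hi : i < d ^ h) (hj : j < d ^ h) :
    lcaHeight d i j = #{t ∈ range h | i / d ^ t ≠ j / d ^ t} := by
  have hle := lcaHeight_le hi hj
  have : {t ∈ range h | i / d ^ t ≠ j / d ^ t} = range (lcaHeight d i j) := by
    ext t
    simp only [mem_filter, mem_range, ne_eq, div_pow_eq_div_pow_iff_lcaHeight_le hi hj, not_le]
    omega
  rw [this, card_range]

end LcaHeight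

theorem SimpleGraph.Walk.abs_sub_le_length {V : Type*} {G : SimpleGraph V} {f : V → ℤ}
    (hf : ∀ u v, G.Adj u v → |f u - f v| ≤ 1) {u v : V} (p : G.Walk u v) :
    |f u - f v| ≤ p.length := by
  induction p with
  | nil => simp
  | cons ha p ih =>
    calc |f _ - f _| ≤ |f _ - f _| + |f _ - f _| := abs_sub_le _ _ _
      _ ≤ 1 + p.length := add_le_add (hf _ _ ha) ih
      _ = _ := by rw [SimpleGraph.Walk.length_cons]; push_cast; ring

namespace dAryTree

variable {d h : ℕ}

def ancestor (i : Fin (d ^ h)) (s : ℕ) (hs : s ≤ h) :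
    (k : Fin (h + 1)) × Fin (d ^ (k : ℕ)) :=
  ⟨⟨h - s, by omega⟩, ⟨i / d ^ s, Nat.div_lt_of_lt_mul <| by
    rw [← pow_add, Nat.add_sub_cancel' hs]; exact i.2⟩⟩

theorem ancestor_adj (i : Fin (d ^ h)) (s : ℕ) (hs : s + 1 ≤ h) :
    (dAryTree d h).Adj (ancestor i (s + 1) hs) (ancestor i s (by omega)) :=
  Or.inl ⟨by simp only [ancestor]; omega, by simp [ancestor, pow_succ, Nat.div_div_eq_div_mul]⟩

theorem ancestor_zero (i : Fin (d ^ h)) : ancestor i 0 (Nat.zero_le h) = leafVert d h i := by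
  unfold ancestor leafVert
  apply Sigma.ext <;> simp

theorem exists_walk_ancestor (i : Fin (d ^ h)) :
    ∀ s (hs : s ≤ h),
      ∃ w : (dAryTree d h).Walk (leafVert d h i) (ancestor i s hs), w.length = s
  | 0, _ => ⟨SimpleGraph.Walk.nil.copy rfl (ancestor_zero i).symm, by simp⟩
  | s + 1, hs => by
    obtain ⟨w, hw⟩ := exists_walk_ancestor i s (by omega)
    exact ⟨w.concat (ancestor_adj i s hs).symm, by simp [hw]⟩

theorem exists_walk_leafVert (i j : Fin (d ^ h)) :
    ∃ w : (dAryTree d h).Walk (leafVert d h i) (leafVert d h j),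
      w.length = 2 * lcaHeight d i j := by
  have hm := lcaHeight_le i.2 j.2
  obtain ⟨wi, hwi⟩ := exists_walk_ancestor i _ hm
  obtain ⟨wj, hwj⟩ := exists_walk_ancestor j _ hm
  have hij : ancestor i _ hm = ancestor j _ hm := by
    simp [ancestor, (div_pow_eq_div_pow_iff_lcaHeight_le i.2 j.2).2 le_rfl]
  exact ⟨wi.append (wj.reverse.copy hij.symm rfl), by simp [hwi, hwj, two_mul]⟩

/-- The level, on the subtree rooted at the vertex `B` of level `L`, and the level reflected about
`L - 1` off it; leaves inside and outside that subtree get values `2 (h + 1 - L)` apart. -/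
def subtreePotential (d L B : ℕ) (x : (k : Fin (h + 1)) × Fin (d ^ (k : ℕ))) : ℤ :=
  if L ≤ (x.1 : ℕ) ∧ (x.2 : ℕ) / d ^ ((x.1 : ℕ) - L) = B then x.1 else 2 * L - 2 - x.1

theorem abs_subtreePotential_sub_le_one (L B : ℕ) {x y : (k : Fin (h + 1)) × Fin (d ^ (k : ℕ))}
    (hxy : (dAryTree d h).Adj x y) :
    |subtreePotential d L B x - subtreePotential d L B y| ≤ 1 := by
  wlog hpc : (x.1 : ℕ) + 1 = y.1 ∧ (x.2 : ℕ) = y.2 / d generalizing x y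
  · rw [abs_sub_comm]; exact this hxy.symm (hxy.resolve_left hpc)
  rcases x with ⟨⟨k, hk⟩, a, ha⟩
  rcases y with ⟨⟨k', hk'⟩, b, hb⟩
  obtain ⟨rfl, rfl⟩ : k + 1 = k' ∧ a = b / d := hpc
  have hstep : L ≤ k → b / d ^ (k + 1 - L) = b / d / d ^ (k - L) := fun hL => by
    rw [show k + 1 - L = k - L + 1 by omega, pow_succ', Nat.div_div_eq_div_mul]
  simp only [subtreePotential]
  split_ifs with h1 h2 h2 <;> rw [abs_le] <;> push_cast
  · omega
  · exact absurd ⟨by omega, by rw [hstep h1.1, h1.2]⟩ h2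
  · have : ¬ L ≤ k := fun hL => h1 ⟨hL, by rw [← hstep hL, h2.2]⟩
    omega
  · omega

theorem two_mul_lcaHeight_le_length (i j : Fin (d ^ h))
    (p : (dAryTree d h).Walk (leafVert d h i) (leafVert d h j)) :
    2 * lcaHeight d i j ≤ p.length := by
  set m := lcaHeight d i j
  rcases Nat.eq_zero_or_pos m with hm0 | hm
  · simp [hm0]
  have hmh : m ≤ h := lcaHeight_le i.2 j.2
  have hlip := p.abs_sub_le_length
    fun _ _ => abs_subtreePotential_sub_le_one (h - m + 1) ((i : ℕ) / d ^ (m - 1))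
  have hL : h - (h - m + 1) = m - 1 := by omega
  have hi : subtreePotential d (h - m + 1) (i / d ^ (m - 1)) (leafVert d h i) = h := by
    rw [subtreePotential, if_pos ⟨by simp only [leafVert]; omega, by simp only [leafVert, hL]⟩]
    rfl
  have hj : subtreePotential d (h - m + 1) (i / d ^ (m - 1)) (leafVert d h j) =
      2 * (h - m + 1 : ℕ) - 2 - h := by
    have : (j : ℕ) / d ^ (m - 1) ≠ i / d ^ (m - 1) := fun hji =>
      absurd ((div_pow_eq_div_pow_iff_lcaHeight_le i.2 j.2).1 hji.symm) (by omega)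
    simp [subtreePotential, leafVert, hL, this]
  rw [hi, hj, abs_le] at hlip
  push_cast [Nat.cast_sub hmh] at hlip
  omega

theorem leafDist_eq (i j : Fin (d ^ h)) : leafDist d h i j = 2 * lcaHeight d i j := by
  obtain ⟨w, hw⟩ := exists_walk_leafVert i j
  obtain ⟨p, hp⟩ := w.reachable.exists_walk_length_eq_dist
  refine le_antisymm (hw ▸ SimpleGraph.dist_le w) ?_
  rw [leafDist, ← hp]
  exact two_mul_lcaHeight_le_length i j p

end dAryTree

section Counting

variable {α : Type*} [Fintype α] {f : α → ℕ} {q r : ℕ}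

theorem card_filter_div_eq_le (hf : Injective f) (hq : 0 < q) : #{x | f x / q = r} ≤ q := by
  calc #{x | f x / q = r} ≤ #(range q) := by
        refine card_le_card_of_injOn (fun x => f x % q)
          (fun x _ => mem_range.2 (Nat.mod_lt _ hq)) fun x hx y hy hxy => hf ?_
        simp only [coe_filter, Set.mem_ofPred_eq, mem_univ, true_and] at hx hy
        rw [← Nat.div_add_mod (f x) q, ← Nat.div_add_mod (f y) q, hx, hy]
        exact congrArg _ hxy
    _ = q := card_range q

theorem le_card_filter_div_eq (hq : 0 < q) (hf : ∀ y, y / q = r → ∃ x, f x = y) :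
    q ≤ #{x | f x / q = r} := by
  calc q = #(range q) := (card_range q).symm
    _ ≤ #{x | f x / q = r} := by
        refine card_le_card_of_surjOn (fun x => f x % q) fun k hk => ?_
        have hk : k < q := mem_range.1 hk
        obtain ⟨x, hx⟩ :=
          hf (q * r + k) (by rw [Nat.mul_add_div hq, Nat.div_eq_of_lt hk, add_zero])
        refine ⟨x, ?_, ?_⟩
        · simp [hx, Nat.mul_add_div hq, Nat.div_eq_of_lt hk]
        · simp [hx, Nat.mod_eq_of_lt hk]

end Counting

theorem Nat.div_eq_div_iff_of_dvd {q a y : ℕ} (hq : 0 < q) (ha : q ∣ a) :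
    y / q = a / q ↔ a ≤ y ∧ y < a + q := by
  obtain ⟨k, rfl⟩ := ha
  rw [Nat.mul_div_cancel_left k hq, Nat.div_eq_iff hq, mul_comm q k]
  omega

theorem Nat.pow_clog_sub_one_le {d m : ℕ} (hd : 1 < d) (hm : 0 < m) :
    d ^ (Nat.clog d m - 1) ≤ m := by
  obtain rfl | hm := Nat.eq_or_lt_of_le hm
  · simp
  · exact (Nat.pow_pred_clog_lt_self hd hm).le

noncomputable def starCost (d h : ℕ) {m : ℕ} (ψ : Fin m → Fin (d ^ h)) : ℕ :=
  ∑ v : Fin m, if v.val = 0 then 0 else leafDist d h (ψ ⟨0, v.pos⟩) (ψ v)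

/-- Half the standalone optimum of an `m`-vertex star: at most `d ^ t` leaves lie in the
height-`t` subtree of the centre.  Truncated subtraction makes the terms with `m ≤ d ^ t`
vanish. -/
def starOpt (d h m : ℕ) : ℕ := ∑ t ∈ range h, (m - d ^ t)

section Star

variable {d h m : ℕ}

theorem starCost_eq (hm : 0 < m) (ψ : Fin m → Fin (d ^ h)) :
    starCost d h ψ =
      2 * ∑ t ∈ range h, #{v | (ψ v : ℕ) / d ^ t ≠ (ψ ⟨0, hm⟩ : ℕ) / d ^ t} := by
  have hterm (v : Fin m) : (if v.val = 0 then 0 else leafDist d h (ψ ⟨0, v.pos⟩) (ψ v)) =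
      2 * #{t ∈ range h | (ψ v : ℕ) / d ^ t ≠ (ψ ⟨0, hm⟩ : ℕ) / d ^ t} := by
    simp only [ne_comm (a := (ψ v : ℕ) / _)]
    rw [← lcaHeight_eq_card (ψ _).2 (ψ v).2, ← dAryTree.leafDist_eq]
    split_ifs with hv
    · obtain rfl : v = ⟨0, hm⟩ := Fin.ext hv
      simp [leafDist]
    · rfl
  rw [starCost, sum_congr rfl fun v _ => hterm v, ← mul_sum]
  simp only [card_filter]
  rw [sum_comm]

theorem two_mul_starOpt_le_starCost (hd : 0 < d) {ψ : Fin m → Fin (d ^ h)} (hψ : Injective ψ) :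
    2 * starOpt d h m ≤ starCost d h ψ := by
  rcases Nat.eq_zero_or_pos m with rfl | hm
  · simp [starOpt]
  rw [starCost_eq hm, starOpt]
  gcongr with t
  have hsame := card_filter_div_eq_le (r := (ψ ⟨0, hm⟩ : ℕ) / d ^ t)
    (Fin.val_injective.comp hψ) (pow_pos hd t)
  have hsplit := card_filter_add_card_filter_not (s := univ)
    fun v => (ψ v : ℕ) / d ^ t = (ψ ⟨0, hm⟩ : ℕ) / d ^ t
  simp only [comp_apply, card_univ, Fintype.card_fin] at hsame hsplit
  simp only [ne_eq]
  omega

theorem starCost_le_of_sandwich (hd : 0 < d) (hm : 0 < m) (ψ : Fin m → Fin (d ^ h))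
    (hout : ∀ v, (ψ v : ℕ) / d ^ Nat.clog d m = (ψ ⟨0, hm⟩ : ℕ) / d ^ Nat.clog d m)
    (hin : ∀ y, y / d ^ (Nat.clog d m - 1) = (ψ ⟨0, hm⟩ : ℕ) / d ^ (Nat.clog d m - 1) →
      ∃ v, (ψ v : ℕ) = y) :
    starCost d h ψ ≤ 2 * starOpt d h m := by
  rw [starCost_eq hm, starOpt]
  gcongr with t
  by_cases ht : t < Nat.clog d m
  · have hblock := le_card_filter_div_eq (f := fun v => (ψ v : ℕ)) (pow_pos hd t)
      fun y hy => hin y (div_pow_eq_div_pow_of_le hy (by omega))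
    have hsplit := card_filter_add_card_filter_not (s := univ)
      fun v => (ψ v : ℕ) / d ^ t = (ψ ⟨0, hm⟩ : ℕ) / d ^ t
    simp only [card_univ, Fintype.card_fin] at hsplit
    simp only [ne_eq]
    omega
  · rw [filter_false_of_mem fun v _ => not_not.2 (div_pow_eq_div_pow_of_le (hout v) (by omega))]
    exact Nat.zero_le _

theorem starOpt_cast (hd : 1 < d) (hm : m ≤ d ^ h) :
    (starOpt d h m : ℚ) = Nat.clog d m * m - ((d : ℚ) ^ Nat.clog d m - 1) / (d - 1) := by
  have hH : Nat.clog d m ≤ h := (Nat.clog_le_iff_le_pow hd).2 hm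
  have htail (t : ℕ) : m - d ^ (Nat.clog d m + t) = 0 :=
    Nat.sub_eq_zero_of_le <|
      (Nat.le_pow_clog hd m).trans (Nat.pow_le_pow_right (by omega) (by omega))
  rw [starOpt, ← Nat.add_sub_cancel' hH, sum_range_add]
  simp only [htail, sum_const_zero, add_zero, Nat.cast_sum]
  rw [sum_congr rfl fun t ht => Nat.cast_sub ((Nat.lt_clog_iff_pow_lt hd).1 (mem_range.1 ht)).le,
    sum_sub_distrib]
  push_cast
  rw [geom_sum_eq (by norm_cast; omega)]
  simp

end Star

section Placements

variable {d h m : ℕ}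

theorem starCost_le_of_split {a : ℕ} (hd : 1 < d) (hm : d ^ h ≤ m) (hma : m + a ≤ d ^ (h + 1))
    (ψ : Fin m → Fin (d ^ (h + 1)))
    (hψ : ∀ v, (ψ v : ℕ) = if (v : ℕ) < d ^ h then (v : ℕ) else v + a) :
    starCost d (h + 1) ψ ≤ 2 * starOpt d (h + 1) m := by
  have hP : 0 < d ^ h := pow_pos (by omega) h
  have hm0 : 0 < m := hP.trans_le hm
  have hc : (ψ ⟨0, hm0⟩ : ℕ) = 0 := by simp [hψ, hP]
  have hH : Nat.clog d m ≤ h + 1 := (Nat.clog_le_iff_le_pow hd).2 (by omega)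
  apply starCost_le_of_sandwich (by omega) hm0 ψ
  · intro v
    rw [hc, Nat.zero_div, Nat.div_eq_zero_iff, hψ]
    refine Or.inr ?_
    rcases hH.eq_or_lt with hH | hH
    · rw [hH]; split_ifs <;> omega
    · have hmH := Nat.le_pow_clog hd m
      have : d ^ Nat.clog d m ≤ d ^ h := Nat.pow_le_pow_right (by omega) (by omega)
      rw [if_pos (by omega)]
      omega
  · intro y hy
    rw [hc, Nat.zero_div, Nat.div_eq_zero_iff, or_iff_right (by positivity)] at hy
    have : d ^ (Nat.clog d m - 1) ≤ d ^ h := Nat.pow_le_pow_right (by omega) (by omega)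
    refine ⟨⟨y, by omega⟩, ?_⟩
    rw [hψ]
    dsimp only
    rw [if_pos (by omega)]

theorem starCost_le_of_shift (hd : 1 < d) (hm : 0 < m) (hmh : d ^ h + m ≤ d ^ (h + 1))
    (ψ : Fin m → Fin (d ^ (h + 1))) (hψ : ∀ v, (ψ v : ℕ) = d ^ h + v) :
    starCost d (h + 1) ψ ≤ 2 * starOpt d (h + 1) m := by
  have hH : Nat.clog d m ≤ h + 1 := (Nat.clog_le_iff_le_pow hd).2 (by omega)
  apply starCost_le_of_sandwich (by omega) hm ψ
  · intro v
    simp only [hψ, add_zero]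
    rcases le_or_gt m (d ^ h) with hmP | hmP
    · have hdvd : d ^ Nat.clog d m ∣ d ^ h := pow_dvd_pow d ((Nat.clog_le_iff_le_pow hd).2 hmP)
      rw [Nat.add_div_of_dvd_right hdvd, Nat.div_eq_of_lt (v.2.trans_le (Nat.le_pow_clog hd m)),
        add_zero]
    · rw [le_antisymm hH ((Nat.lt_clog_iff_pow_lt hd).2 hmP), Nat.div_eq_of_lt (by omega),
        Nat.div_eq_of_lt (by omega)]
  · intro y hy
    have hdvd : d ^ (Nat.clog d m - 1) ∣ d ^ h := pow_dvd_pow d (by omega)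
    rw [hψ, add_zero, Nat.div_eq_div_iff_of_dvd (by positivity) hdvd] at hy
    have := Nat.pow_clog_sub_one_le hd hm
    refine ⟨⟨y - d ^ h, by omega⟩, ?_⟩
    rw [hψ]
    dsimp only
    omega

theorem starCost_le_of_top (hd : 1 < d) (hm : 0 < m) (hmh : m ≤ d ^ h)
    (ψ : Fin m → Fin (d ^ h)) (hψ : ∀ v, (ψ v : ℕ) = d ^ h - 1 - v) :
    starCost d h ψ ≤ 2 * starOpt d h m := by
  have hH : Nat.clog d m ≤ h := (Nat.clog_le_iff_le_pow hd).2 hmh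
  have htop {k : ℕ} (hk : k ≤ h) (y : ℕ) :
      y / d ^ k = (d ^ h - 1) / d ^ k ↔ d ^ h - d ^ k ≤ y ∧ y < d ^ h := by
    have hpos : 0 < d ^ k := by positivity
    have hkh : d ^ k ≤ d ^ h := Nat.pow_le_pow_right (by omega) hk
    have hdvd : d ^ k ∣ d ^ h - d ^ k := Nat.dvd_sub (pow_dvd_pow d hk) dvd_rfl
    rw [(Nat.div_eq_div_iff_of_dvd (y := d ^ h - 1) hpos hdvd).2 ⟨by omega, by omega⟩,
      Nat.div_eq_div_iff_of_dvd hpos hdvd, Nat.sub_add_cancel hkh]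
  apply starCost_le_of_sandwich (by omega) hm ψ
  · intro v
    have := Nat.le_pow_clog hd m
    simp only [hψ, Nat.sub_zero]
    exact (htop hH _).2 ⟨by omega, by omega⟩
  · intro y hy
    simp only [hψ, Nat.sub_zero] at hy
    obtain ⟨hy1, hy2⟩ := (htop (by omega) y).1 hy
    have := Nat.pow_clog_sub_one_le hd hm
    refine ⟨⟨d ^ h - 1 - y, by omega⟩, ?_⟩
    rw [hψ]
    dsimp only
    omega

end Placements

def layout (P N : ℕ) (n : Fin 3 → ℕ) : (i : Fin 3) × Fin (n i) → ℕ
  | ⟨0, v⟩ => if (v : ℕ) < P then v else v + n 1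
  | ⟨1, v⟩ => P + v
  | ⟨2, v⟩ => N - 1 - v

section Layout

variable {P N : ℕ} {n : Fin 3 → ℕ}

theorem layout_lt (hP : P ≤ n 0) (hN : n 0 + n 1 + n 2 = N) (p : (i : Fin 3) × Fin (n i)) :
    layout P N n p < N := by
  obtain ⟨i, v⟩ := p
  have hv := v.2
  fin_cases i <;> simp [layout] at hv ⊢ <;> (try split_ifs) <;> omega

theorem layout_injective (hP : P ≤ n 0) (hN : n 0 + n 1 + n 2 = N) :
    Injective (layout P N n) := by
  rintro ⟨i, v⟩ ⟨j, w⟩ hvw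
  have hv := v.2
  have hw := w.2
  fin_cases i <;> fin_cases j <;> simp [layout, Fin.ext_iff] at hvw hv hw ⊢ <;>
    (try split_ifs at hvw) <;> omega

end Layout

section ThreeStars

variable {d h : ℕ} {n : Fin 3 → ℕ}

theorem triStarCost_eq_sum_starCost (φ : (i : Fin 3) × Fin (n i) → Fin (d ^ h)) :
    triStarCost d h n φ = ∑ i, starCost d h fun v => φ ⟨i, v⟩ :=
  rfl

theorem sum_two_mul_starOpt_le_triStarCost (hd : 0 < d)
    {φ : (i : Fin 3) × Fin (n i) → Fin (d ^ h)} (hφ : Injective φ) :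
    ∑ i, 2 * starOpt d h (n i) ≤ triStarCost d h n φ :=
  sum_le_sum fun _ _ => two_mul_starOpt_le_starCost hd (hφ.comp sigma_mk_injective)

theorem exists_injective_triStarCost_le (hd : 1 < d) (hsum : n 0 + n 1 + n 2 = d ^ h)
    (hbig : d ^ h / d ≤ n 0) :
    ∃ φ : (i : Fin 3) × Fin (n i) → Fin (d ^ h),
      Injective φ ∧ triStarCost d h n φ ≤ ∑ i, 2 * starOpt d h (n i) := by
  let φ : (i : Fin 3) × Fin (n i) → Fin (d ^ h) :=
    fun p => ⟨layout (d ^ h / d) (d ^ h) n p, layout_lt hbig hsum p⟩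
  refine ⟨φ, fun p q hpq => layout_injective hbig hsum (congrArg Fin.val hpq), ?_⟩
  rw [triStarCost_eq_sum_starCost]
  refine sum_le_sum fun i _ => ?_
  rcases Nat.eq_zero_or_pos (n i) with hi | hi
  · have : IsEmpty (Fin (n i)) := by rw [hi]; infer_instance
    simp [starCost]
  cases h with
  | zero => rw [starCost_eq hi]; simp
  | succ h =>
    have hP : d ^ (h + 1) / d = d ^ h := by rw [pow_succ, Nat.mul_div_cancel _ (by omega)]
    rw [hP] at hbig
    match i, hi with
    | 0, _ =>
      exact starCost_le_of_split (a := n 1) hd hbig (by omega) (fun v => φ ⟨0, v⟩)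
        fun v => by rw [← hP]; rfl
    | 1, hi =>
      exact starCost_le_of_shift hd hi (by omega) (fun v => φ ⟨1, v⟩)
        fun v => by rw [← hP]; rfl
    | 2, hi => exact starCost_le_of_top hd hi (by omega) (fun v => φ ⟨2, v⟩) fun v => rfl

end ThreeStars

theorem three_stars_optimal_value_general (d h : ℕ) (hd : 2 ≤ d) (n : Fin 3 → ℕ)
    (hsum : n 0 + n 1 + n 2 = d ^ h) (hbig : d ^ h / d ≤ n 0) :
    IsLeast {c : ℚ | ∃ φ : ((i : Fin 3) × Fin (n i)) → Fin (d ^ h),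
        Function.Injective φ ∧ c = (triStarCost d h n φ : ℚ)}
      (∑ i : Fin 3, 2 * ((Nat.clog d (n i) : ℚ) * (n i) -
        ((d : ℚ) ^ Nat.clog d (n i) - 1) / ((d : ℚ) - 1))) := by
  have hvalue : ∑ i : Fin 3, 2 * ((Nat.clog d (n i) : ℚ) * (n i) -
      ((d : ℚ) ^ Nat.clog d (n i) - 1) / ((d : ℚ) - 1)) =
        (∑ i, 2 * starOpt d h (n i) : ℕ) := by
    push_cast
    refine sum_congr rfl fun i _ => ?_
    rw [starOpt_cast hd (by fin_cases i <;> simp <;> omega)]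
  obtain ⟨φ, hφ, hcost⟩ := exists_injective_triStarCost_le hd hsum hbig
  rw [hvalue]
  refine ⟨⟨φ, hφ, ?_⟩, ?_⟩
  · exact_mod_cast (le_antisymm hcost (sum_two_mul_starOpt_le_triStarCost (by omega) hφ)).symm
  · rintro _ ⟨ψ, hψ, rfl⟩
    exact_mod_cast sum_two_mul_starOpt_le_triStarCost (by omega) hψ

/-- Let the guest graph be the disjoint union of three stars with `n 0 ≥ n 1 ≥ n 2`
vertices, with `n 0 + n 1 + n 2 = d^h` a power of `d ≥ 2` and `n 0 ≥ d^h/d`, and let the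
host be the complete `d`-regular tree of height `h`.  The minimum total arrangement cost
is `Σ_i 2·(h_i·n_i − (d^{h_i} − 1)/(d − 1))` with `h_i = ⌈log_d (n i)⌉`. -/
theorem three_stars_optimal_value (d h : ℕ) (hd : 2 ≤ d) (n : Fin 3 → ℕ)
    (hord1 : n 2 ≤ n 1) (hord2 : n 1 ≤ n 0)
    (hsum : n 0 + n 1 + n 2 = d ^ h) (hbig : d ^ h / d ≤ n 0) :
    IsLeast {c : ℚ | ∃ φ : ((i : Fin 3) × Fin (n i)) → Fin (d ^ h),
        Function.Injective φ ∧ c = (triStarCost d h n φ : ℚ)}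
      (∑ i : Fin 3, 2 * ((Nat.clog d (n i) : ℚ) * (n i) -
        ((d : ℚ) ^ Nat.clog d (n i) - 1) / ((d : ℚ) - 1))) :=
  three_stars_optimal_value_general d h hd n hsum hbig
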